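/- arXiv:2502.02403 — 4 statements merged into one kernel-verified Lean document; each statement's English description precedes it below -/
import Mathlib

section
/- Let K ⊆ C₁ be a subspace with ∂₁(K) ⊆ ∂₀(K) and let x ∈ C₀. If there exist k ≥ 1, elements c₀, …, c_k ∈ C₁ and d₀, …, d_k ∈ K such that ∂₀c₀ + ∂₁c₁ = x + ∂₀d₀, ∂₀c_i + ∂₁c_{i+1} = ∂₀d_i for 1 ≤ i ≤ k−1, and ∂₀c_k = ∂₀d_k (i.e., the classes of c₀, …, c_k in C₁/K solve the zigzag system for x modulo ∂₀(K)), then there exist b₀, …, b_k ∈ C₁ forming a zigzag solution of length k for x. -/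
/-- `b₀, …, b_k ∈ C₁` form a zigzag solution of length `k` for `x`:
`∂₀b₀ + ∂₁b₁ = x`, `∂₀b_i + ∂₁b_{i+1} = 0` for `1 ≤ i ≤ k-1`, and `∂₀b_k = 0`. -/
def IsZigzag {C₀ C₁ : Type*} [AddCommGroup C₀] [AddCommGroup C₁]
    [Module (ZMod 2) C₀] [Module (ZMod 2) C₁]
    (d0 d1 : C₁ →ₗ[ZMod 2] C₀) (k : ℕ) (x : C₀) (b : ℕ → C₁) : Prop :=
  d0 (b 0) + d1 (b 1) = x ∧
  (∀ i : ℕ, 1 ≤ i → i < k → d0 (b i) + d1 (b (i + 1)) = 0) ∧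
  d0 (b k) = 0

/-!
STATEMENT 4: Let `K ⊆ C₁` with `∂₁(K) ⊆ ∂₀(K)` and `x ∈ C₀`.  If there are
`k ≥ 1`, `c₀, …, c_k ∈ C₁`, `d₀, …, d_k ∈ K` with `∂₀c₀ + ∂₁c₁ = x + ∂₀d₀`,
`∂₀c_i + ∂₁c_{i+1} = ∂₀d_i` for `1 ≤ i ≤ k-1`, and `∂₀c_k = ∂₀d_k`
(i.e., the classes of the `c_i` in `C₁/K` solve the zigzag system for `x`
modulo `∂₀(K)`), then there exist `b₀, …, b_k ∈ C₁` forming a zigzag solution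
of length `k` for `x`.
-/
theorem stmt4
    (C₀ C₁ : Type*) [AddCommGroup C₀] [AddCommGroup C₁]
    [Module (ZMod 2) C₀] [Module (ZMod 2) C₁]
    [FiniteDimensional (ZMod 2) C₀] [FiniteDimensional (ZMod 2) C₁]
    (d0 d1 : C₁ →ₗ[ZMod 2] C₀)
    (K : Submodule (ZMod 2) C₁)
    (hK : Submodule.map d1 K ≤ Submodule.map d0 K)
    (x : C₀) (k : ℕ) (hk : 1 ≤ k)
    (c d : ℕ → C₁)
    (hd : ∀ i : ℕ, i ≤ k → d i ∈ K)
    (h0 : d0 (c 0) + d1 (c 1) = x + d0 (d 0))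
    (hmid : ∀ i : ℕ, 1 ≤ i → i < k → d0 (c i) + d1 (c (i + 1)) = d0 (d i))
    (hlast : d0 (c k) = d0 (d k)) :
    ∃ b : ℕ → C₁, IsZigzag d0 d1 k x b := by
  classical
  have add_self : ∀ y : C₀, y + y = 0 := by
    intro y
    have h2 : (2 : ZMod 2) = 0 := rfl
    have : (2 : ZMod 2) • y = 0 := by rw [h2, zero_smul]
    simpa [two_smul] using this
  have key : ∀ v : C₁, v ∈ K → ∃ w, w ∈ K ∧ d0 w = d1 v := by
    intro v hv
    have h : d1 v ∈ Submodule.map d0 K := hK ⟨v, hv, rfl⟩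
    obtain ⟨w, hw, hweq⟩ := h
    exact ⟨w, hw, hweq⟩
  set F : C₁ → C₁ := fun v => if h : v ∈ K then (key v h).choose else 0 with hFdef
  have hFK : ∀ v (hv : v ∈ K), F v ∈ K := by
    intro v hv
    simp only [hFdef, dif_pos hv]
    exact (key v hv).choose_spec.1
  have hFd : ∀ v (hv : v ∈ K), d0 (F v) = d1 v := by
    intro v hv
    simp only [hFdef, dif_pos hv]
    exact (key v hv).choose_spec.2
  set g : ℕ → C₁ := fun j => Nat.rec (d k) (fun j gj => d (k - (j + 1)) + F gj) j with hgdef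
  have hg0 : g 0 = d k := rfl
  have hgsucc : ∀ j, g (j + 1) = d (k - (j + 1)) + F (g j) := fun j => rfl
  have hgK : ∀ j, g j ∈ K := by
    intro j
    induction j with
    | zero => exact hd k le_rfl
    | succ j ih =>
      rw [hgsucc]
      exact K.add_mem (hd _ (Nat.sub_le _ _)) (hFK _ ih)
  have hgd : ∀ j, d0 (g (j + 1)) = d0 (d (k - (j + 1))) + d1 (g j) := by
    intro j
    rw [hgsucc, map_add, hFd _ (hgK j)]
  refine ⟨fun i => c i + g (k - i), ?_, ?_, ?_⟩
  · show d0 (c 0 + g (k - 0)) + d1 (c 1 + g (k - 1)) = x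
    have hk1 : k - 0 = (k - 1) + 1 := by omega
    have hk2 : k - ((k - 1) + 1) = 0 := by omega
    calc d0 (c 0 + g (k - 0)) + d1 (c 1 + g (k - 1))
        = (d0 (c 0) + d1 (c 1)) + (d0 (g (k - 0)) + d1 (g (k - 1))) := by
          rw [map_add, map_add]; abel
      _ = (x + d0 (d 0)) + (d0 (d 0) + d1 (g (k - 1)) + d1 (g (k - 1))) := by
          rw [h0, hk1, hgd (k - 1), hk2]
      _ = x := by
          rw [add_assoc (d0 (d 0)), add_self, add_zero, add_assoc, add_self, add_zero]
  · intro i hi1 hik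
    have hk1 : k - i = (k - (i + 1)) + 1 := by omega
    have hk2 : k - ((k - (i + 1)) + 1) = i := by omega
    calc d0 (c i + g (k - i)) + d1 (c (i + 1) + g (k - (i + 1)))
        = (d0 (c i) + d1 (c (i + 1))) + (d0 (g (k - i)) + d1 (g (k - (i + 1)))) := by
          rw [map_add, map_add]; abel
      _ = d0 (d i) + (d0 (d i) + d1 (g (k - (i + 1))) + d1 (g (k - (i + 1)))) := by
          rw [hmid i hi1 hik, hk1, hgd, hk2]
      _ = 0 := by
          rw [add_assoc (d0 (d i)), add_self, add_zero, add_self]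
  · show d0 (c k + g (k - k)) = 0
    rw [Nat.sub_self, hg0, map_add, hlast, add_self]
end

section
/- If r ∈ ker δ^k ∩ R for some k ≥ 1, then there exist b₀, …, b_k ∈ C₁ forming a zigzag solution of length k for x: take b₀ with ∂₀b₀ = x + r, and b_i = ∂₁⁻¹(r_i) where r₁ = r and r_{i+1} = δ(r_i) for 1 ≤ i ≤ k−1. -/
/-- `ker δ^k`, via the explicit characterization (given in the context):
`ker δ^k = {r ∈ C₀ : ∃ c₁, …, c_k ∈ C₁ with ∂₁c₁ = r, ∂₁c_{j+1} = ∂₀c_j for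
1 ≤ j ≤ k-1, and ∂₀c_k = 0}`. -/
def kerDeltaPow {C₀ C₁ : Type*} [AddCommGroup C₀] [AddCommGroup C₁]
    [Module (ZMod 2) C₀] [Module (ZMod 2) C₁]
    (d0 d1 : C₁ →ₗ[ZMod 2] C₀) (k : ℕ) : Set C₀ :=
  {r | ∃ c : ℕ → C₁, d1 (c 1) = r ∧
    (∀ j : ℕ, 1 ≤ j → j < k → d1 (c (j + 1)) = d0 (c j)) ∧ d0 (c k) = 0}

/-!
STATEMENT 16: If `r ∈ ker δ^k ∩ R` for some `k ≥ 1` (where `R = x + ∂₀(C₁)`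
is the remainder set), then there exist `b₀, …, b_k ∈ C₁` forming a zigzag
solution of length `k` for `x`: one may take `b₀` with `∂₀b₀ = x + r` and
`b₁ = ∂₁⁻¹(r)` (and `b_i = ∂₁⁻¹(r_i)` with `r₁ = r`, `r_{i+1} = δ(r_i)`).
-/
theorem stmt16
    (C₀ C₁ : Type*) [AddCommGroup C₀] [AddCommGroup C₁]
    [Module (ZMod 2) C₀] [Module (ZMod 2) C₁]
    [FiniteDimensional (ZMod 2) C₀] [FiniteDimensional (ZMod 2) C₁]
    (d0 d1 : C₁ →ₗ[ZMod 2] C₀)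
    (hd1 : Function.Injective d1)
    (x : C₀) (k : ℕ) (hk : 1 ≤ k)
    (r : C₀)
    (hr : r ∈ kerDeltaPow d0 d1 k ∩ {y : C₀ | ∃ c : C₁, y = x + d0 c}) :
    ∃ b : ℕ → C₁, IsZigzag d0 d1 k x b ∧ d0 (b 0) = x + r ∧ d1 (b 1) = r := by
  obtain ⟨⟨c, hc1, hcj, hck⟩, ⟨c0, hc0⟩⟩ := hr
  have hkne : k ≠ 0 := Nat.one_le_iff_ne_zero.mp hk
  have two : ∀ y : C₀, y + y = 0 := fun y => by
    rw [← two_smul (ZMod 2) y, show (2 : ZMod 2) = 0 by decide, zero_smul]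
  refine ⟨fun i => if i = 0 then c0 else c i, ⟨?_, ?_, ?_⟩, ?_, ?_⟩
  · simp only [reduceIte, one_ne_zero, if_false, hc1, hc0]
    rw [add_left_comm, two, add_zero]
  · intro i h1 h2
    simp only [Nat.one_le_iff_ne_zero.mp h1, Nat.succ_ne_zero i, if_false,
      hcj i h1 h2, two]
  · simp only [hkne, if_false]; exact hck
  · simp only [reduceIte, hc0]
    rw [← add_assoc, two, zero_add]
  · simp only [one_ne_zero, if_false]; exact hc1
end

section
/- Let m ≥ 1 be such that ker δ^i ⊆ ker δ^m for all i ≥ 1. Then the zigzag system for x admits a solution (of some length k ≥ 1) if and only if ker δ^m ∩ R ≠ ∅, where R = x + ∂₀(C₁). -/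
/-!
STATEMENT 17: Let `m ≥ 1` be such that `ker δ^i ⊆ ker δ^m` for all `i ≥ 1`.
Then the zigzag system for `x` admits a solution (of some length `k ≥ 1`) if
and only if `ker δ^m ∩ R ≠ ∅`, where `R = x + ∂₀(C₁)` is the remainder set.
-/
theorem stmt17
    (C₀ C₁ : Type*) [AddCommGroup C₀] [AddCommGroup C₁]
    [Module (ZMod 2) C₀] [Module (ZMod 2) C₁]
    [FiniteDimensional (ZMod 2) C₀] [FiniteDimensional (ZMod 2) C₁]
    (d0 d1 : C₁ →ₗ[ZMod 2] C₀)
    (hd1 : Function.Injective d1)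
    (x : C₀) (m : ℕ) (hm : 1 ≤ m)
    (hker : ∀ i : ℕ, 1 ≤ i → kerDeltaPow d0 d1 i ⊆ kerDeltaPow d0 d1 m) :
    (∃ k : ℕ, 1 ≤ k ∧ ∃ b : ℕ → C₁, IsZigzag d0 d1 k x b) ↔
      (kerDeltaPow d0 d1 m ∩ {y : C₀ | ∃ c : C₁, y = x + d0 c}).Nonempty := by
  have h2 : ∀ a : C₀, a + a = 0 := by
    intro a
    rw [← two_smul (ZMod 2) a, show (2 : ZMod 2) = 0 from rfl, zero_smul]
  have hneg : ∀ a : C₀, -a = a := fun a => neg_eq_of_add_eq_zero_left (h2 a)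
  constructor
  · rintro ⟨k, hk, b, h0, hmid, hend⟩
    refine ⟨x + d0 (b 0), hker k hk ⟨b, ?_, ?_, hend⟩, ⟨b 0, rfl⟩⟩
    · have h := eq_sub_of_add_eq' h0
      rwa [sub_eq_add_neg, hneg] at h
    · intro j hj hjk
      have h := eq_neg_of_add_eq_zero_right (hmid j hj hjk)
      rwa [hneg] at h
  · rintro ⟨r, ⟨c, hc1, hcmid, hcend⟩, c0, hr⟩
    set b : ℕ → C₁ := fun i => if i = 0 then c0 else c i with hbdef
    have hb0 : b 0 = c0 := rfl
    have hbs : ∀ i : ℕ, i ≠ 0 → b i = c i := fun i h => if_neg h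
    refine ⟨m, hm, b, ?_, ?_, ?_⟩
    · rw [hb0, hbs 1 one_ne_zero, hc1, hr, add_left_comm, h2, add_zero]
    · intro i hi him
      rw [hbs i (by omega), hbs (i + 1) (by omega), hcmid i hi him, h2]
    · rw [hbs m (by omega)]; exact hcend
end

section
/- For every k ≥ 1, there exist b₀, …, b_k ∈ C₁ forming a zigzag solution of length k for x if and only if ker δ^k ∩ R ≠ ∅. Consequently, the minimal length of a zigzag solution for x equals min{k ≥ 1 : ker δ^k ∩ R ≠ ∅} whenever either quantity is defined. -/
/-!
STATEMENT 18: For every `k ≥ 1`, there is a zigzag solution of length `k` for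
`x` if and only if `ker δ^k ∩ R ≠ ∅`, where `R = x + ∂₀(C₁)`.  Consequently,
the minimal length of a zigzag solution for `x` equals
`min {k ≥ 1 : ker δ^k ∩ R ≠ ∅}` whenever either quantity is defined.
-/

lemma addself2 {M : Type*} [AddCommGroup M] [Module (ZMod 2) M] (a : M) : a + a = 0 := by
  have h2 : (2 : ZMod 2) = 0 := rfl
  calc a + a = (2 : ZMod 2) • a := (two_smul _ a).symm
    _ = 0 := by rw [h2, zero_smul]

lemma eq_of_add_eq_zero2 {M : Type*} [AddCommGroup M] [Module (ZMod 2) M] {a b : M}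
    (h : a + b = 0) : a = b := by
  have h1 : a = -b := eq_neg_of_add_eq_zero_left h
  have h2 : -b = b := neg_eq_of_add_eq_zero_left (addself2 b)
  rw [h1, h2]

theorem stmt18
    (C₀ C₁ : Type*) [AddCommGroup C₀] [AddCommGroup C₁]
    [Module (ZMod 2) C₀] [Module (ZMod 2) C₁]
    [FiniteDimensional (ZMod 2) C₀] [FiniteDimensional (ZMod 2) C₁]
    (d0 d1 : C₁ →ₗ[ZMod 2] C₀)
    (hd1 : Function.Injective d1)
    (x : C₀) :
    (∀ k : ℕ, 1 ≤ k →
      ((∃ b : ℕ → C₁, IsZigzag d0 d1 k x b) ↔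
        (kerDeltaPow d0 d1 k ∩ {y : C₀ | ∃ c : C₁, y = x + d0 c}).Nonempty)) ∧
    sInf {k : ℕ | 1 ≤ k ∧ ∃ b : ℕ → C₁, IsZigzag d0 d1 k x b} =
      sInf {k : ℕ | 1 ≤ k ∧
        (kerDeltaPow d0 d1 k ∩ {y : C₀ | ∃ c : C₁, y = x + d0 c}).Nonempty} := by

  have key : ∀ k : ℕ, 1 ≤ k →
      ((∃ b : ℕ → C₁, IsZigzag d0 d1 k x b) ↔
        (kerDeltaPow d0 d1 k ∩ {y : C₀ | ∃ c : C₁, y = x + d0 c}).Nonempty) := by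
    intro k hk
    constructor
    · rintro ⟨b, h1, h2, h3⟩
      refine ⟨d1 (b 1), ⟨b, rfl, fun j hj hjk => (eq_of_add_eq_zero2 (h2 j hj hjk)).symm, h3⟩,
        ⟨b 0, ?_⟩⟩
      rw [← h1, add_comm (d0 (b 0)), add_assoc, addself2, add_zero]
    · rintro ⟨r, ⟨c, hc1, hc2, hc3⟩, ⟨c0, hr⟩⟩
      refine ⟨fun i => if i = 0 then c0 else c i, ?_, ?_, ?_⟩
      · simp only [if_pos rfl, if_true, if_neg one_ne_zero]
        rw [hc1, hr, ← add_assoc, add_comm (d0 c0) x, add_assoc, addself2, add_zero]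
      · intro i hi hik
        have hi0 : i ≠ 0 := by omega
        simp only [if_neg hi0, if_neg (Nat.succ_ne_zero i)]
        rw [hc2 i hi hik]
        exact addself2 _
      · have hk0 : k ≠ 0 := by omega
        simp only [if_neg hk0]
        exact hc3
  refine ⟨key, ?_⟩
  congr 1
  ext k
  exact and_congr_right fun hk => key k hk
end
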